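/- For every q ∈ ℂ with 0 < |q| < 0.24 and arg(q) ∈ [π/4, π/2], and every x ∈ ℂ with |x| = |q|^{-3/2}, one has |θ(q,x)| > 0.224. -/

import Mathlib

set_option maxHeartbeats 1000000

/-- The partial theta function `θ(q,x) = Σ_{j≥0} q^(j(j+1)/2) x^j`. -/
noncomputable def theta (q x : ℂ) : ℂ := ∑' j : ℕ, q ^ (j * (j + 1) / 2) * x ^ j

/-- The argument of a complex number, normalized to take values in `[0, 2π)`. -/
noncomputable def argTwoPi (z : ℂ) : ℝ :=
  if Complex.arg z < 0 then Complex.arg z + 2 * Real.pi else Complex.arg z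

theorem theta_lower_bound_small_q (q : ℂ) (hq : 0 < ‖q‖ ∧ ‖q‖ < 0.24)
    (harg : argTwoPi q ∈ Set.Icc (Real.pi / 4) (Real.pi / 2)) (x : ℂ)
    (hx : ‖x‖ = ‖q‖ ^ (-(3 : ℝ) / 2 : ℝ)) :
    0.224 < ‖theta q x‖ := by
  obtain ⟨ht0, ht1⟩ := hq
  set t := ‖q‖ with htdef
  have htlt1 : t < 1 := lt_trans ht1 (by norm_num)
  -- cast of the nat exponent
  have hcast : ∀ j : ℕ, ((j * (j + 1) / 2 : ℕ) : ℝ) = (j : ℝ) * ((j : ℝ) + 1) / 2 := by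
    intro j
    rw [Nat.cast_div (Nat.even_mul_succ_self j).two_dvd (by norm_num)]
    push_cast; ring
  -- norm of each term
  have hnorm : ∀ j : ℕ, ‖q ^ (j * (j + 1) / 2) * x ^ j‖
      = t ^ (((j : ℝ) * (j : ℝ) - 2 * (j : ℝ)) / 2) := by
    intro j
    rw [norm_mul, norm_pow, norm_pow, hx,
      ← Real.rpow_natCast t (j * (j + 1) / 2), ← Real.rpow_natCast (t ^ (-(3 : ℝ) / 2 : ℝ)) j,
      ← Real.rpow_mul ht0.le, ← Real.rpow_add ht0]
    congr 1
    rw [hcast]; ring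
  -- summability
  have hgeo : Summable (fun j : ℕ => t ^ j) := summable_geometric_of_lt_one ht0.le htlt1
  have hb : ∀ j : ℕ, t ^ (((j : ℝ) * (j : ℝ) - 2 * (j : ℝ)) / 2) ≤ t ^ (-(2 : ℝ)) * t ^ j := by
    intro j
    rw [← Real.rpow_natCast t j, ← Real.rpow_add ht0]
    exact Real.rpow_le_rpow_of_exponent_ge ht0 htlt1.le (by nlinarith [sq_nonneg ((j : ℝ) - 2)])
  have hnormsum : Summable (fun j : ℕ => ‖q ^ (j * (j + 1) / 2) * x ^ j‖) := by
    refine Summable.of_nonneg_of_le (fun j => (norm_nonneg _))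
      (fun j => ?_) (hgeo.mul_left (t ^ (-(2 : ℝ))))
    rw [hnorm]; exact hb j
  have hsum : Summable (fun j : ℕ => q ^ (j * (j + 1) / 2) * x ^ j) :=
    Summable.of_norm (by simpa using hnormsum)
  -- split off the first three terms
  have hsplit := Summable.sum_add_tsum_nat_add (f := fun j : ℕ => q ^ (j * (j + 1) / 2) * x ^ j) 3 hsum
  have hhead3 : (∑ i ∈ Finset.range 3, q ^ (i * (i + 1) / 2) * x ^ i)
      = 1 + q * x + q ^ 3 * x ^ 2 := by
    simp [Finset.sum_range_succ]
  -- square root of t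
  set v : ℝ := t ^ ((1 : ℝ) / 2) with hvdef
  have hv0 : 0 < v := Real.rpow_pos_of_pos ht0 _
  have hvv : v * v = t := by
    rw [hvdef, ← Real.rpow_add ht0]; norm_num
  have hvlt : v < 0.49 := by nlinarith
  have hrv : t ^ ((-1 : ℝ) / 2) = v⁻¹ := by
    rw [show ((-1 : ℝ) / 2) = -((1 : ℝ) / 2) by norm_num, Real.rpow_neg ht0.le, hvdef]
  have hv32 : t ^ ((3 : ℝ) / 2) = t * v := by
    rw [show ((3 : ℝ) / 2) = 1 + (1 : ℝ) / 2 by norm_num, Real.rpow_add ht0, Real.rpow_one, hvdef]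
  -- tail bound
  have htail_normsum : Summable (fun j : ℕ =>
      ‖q ^ ((j + 3) * ((j + 3) + 1) / 2) * x ^ (j + 3)‖) :=
    (summable_nat_add_iff 3).mpr hnormsum
  have htail_le : ‖∑' j : ℕ, q ^ ((j + 3) * ((j + 3) + 1) / 2) * x ^ (j + 3)‖
      ≤ t ^ ((3 : ℝ) / 2) * (1 - t)⁻¹ := by
    have h1 : ‖∑' j : ℕ, q ^ ((j + 3) * ((j + 3) + 1) / 2) * x ^ (j + 3)‖
        ≤ ∑' j : ℕ, ‖q ^ ((j + 3) * ((j + 3) + 1) / 2) * x ^ (j + 3)‖ := by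
      simpa using
        norm_tsum_le_tsum_norm (f := fun j : ℕ => q ^ ((j + 3) * ((j + 3) + 1) / 2) * x ^ (j + 3))
          (by simpa using htail_normsum)
    have h2 : ∑' j : ℕ, ‖q ^ ((j + 3) * ((j + 3) + 1) / 2) * x ^ (j + 3)‖
        ≤ ∑' j : ℕ, t ^ ((3 : ℝ) / 2) * t ^ j := by
      refine Summable.tsum_le_tsum (fun j => ?_) htail_normsum (hgeo.mul_left _)
      rw [hnorm (j + 3), ← Real.rpow_natCast t j, ← Real.rpow_add ht0]
      refine Real.rpow_le_rpow_of_exponent_ge ht0 htlt1.le ?_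
      push_cast
      nlinarith [sq_nonneg ((j : ℝ))]
    have h3 : ∑' j : ℕ, t ^ ((3 : ℝ) / 2) * t ^ j = t ^ ((3 : ℝ) / 2) * (1 - t)⁻¹ := by
      rw [tsum_mul_left, tsum_geometric_of_lt_one ht0.le htlt1]
    linarith
  -- the argument of q
  have hargeq : Complex.arg q = argTwoPi q := by
    unfold argTwoPi
    split_ifs with h
    · exfalso
      have h1 := Complex.neg_pi_lt_arg q
      have h2 : Complex.arg q + 2 * Real.pi ≤ Real.pi / 2 := by
        have h2' := harg.2
        unfold argTwoPi at h2'
        rw [if_pos h] at h2'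
        exact h2'
      have h3 := Real.pi_gt_three
      linarith
    · rfl
  have harg1 : Real.pi / 4 ≤ Complex.arg q := hargeq ▸ harg.1
  have harg2 : Complex.arg q ≤ Real.pi / 2 := hargeq ▸ harg.2
  have hpi : (3.141592 : ℝ) < Real.pi := Real.pi_gt_d6
  have hpi2 : Real.pi < 3.15 := Real.pi_lt_d2
  -- head bound via the rotation trick
  set s : ℂ := Complex.exp ((Complex.arg q / 2 : ℝ) * Complex.I) with hsdef
  have habs_s : ‖s‖ = 1 := Complex.norm_exp_ofReal_mul_I _
  have hs_im : s.im = Real.sin (Complex.arg q / 2) := Complex.exp_ofReal_mul_I_im _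
  have hq_eq : q = (t : ℂ) * s ^ 2 := by
    conv_lhs => rw [← Complex.norm_mul_exp_arg_mul_I q]
    congr 1
    rw [hsdef, sq, ← Complex.exp_add]
    congr 1
    push_cast; ring
  have habs_w : ‖q * x‖ = t ^ ((-1 : ℝ) / 2) := by
    rw [norm_mul, hx, show ((-1 : ℝ) / 2) = 1 + (-(3 : ℝ) / 2) by norm_num,
      Real.rpow_add ht0, Real.rpow_one]
  set c : ℂ := ((t⁻¹ : ℝ) : ℂ) with hcdef
  have h1 : (q * x) * (starRingEnd ℂ) (q * x) = c := by
    rw [Complex.mul_conj, hcdef]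
    congr 1
    rw [Complex.normSq_eq_norm_sq, habs_w, ← Real.rpow_natCast (t ^ ((-1 : ℝ) / 2)) 2,
      ← Real.rpow_mul ht0.le]
    norm_num
    rw [Real.rpow_neg_one]
  have h2 : s * (starRingEnd ℂ) s = 1 := by
    rw [Complex.mul_conj, Complex.normSq_eq_norm_sq, habs_s]
    norm_num
  have hc : (t : ℂ) * c = 1 := by
    rw [hcdef, ← Complex.ofReal_mul, mul_inv_cancel₀ (ne_of_gt ht0)]
    norm_num
  have h1' : q * x * ((starRingEnd ℂ) q * (starRingEnd ℂ) x) = c := by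
    rw [← map_mul]; exact h1
  have key : (1 + q * x + q ^ 3 * x ^ 2) * ((starRingEnd ℂ) ((q * x) * s))
      = ((starRingEnd ℂ) ((q * x) * s) + (q * x) * s) + c * (starRingEnd ℂ) s := by
    simp only [map_mul]
    linear_combination ((starRingEnd ℂ) s) * h1' + q * (q * x) * ((starRingEnd ℂ) s) * h1'
      + (q * x) * c * ((starRingEnd ℂ) s) * hq_eq
      + (q * x) * s * (t : ℂ) * c * h2 + (q * x) * s * hc
  have him : (((starRingEnd ℂ) ((q * x) * s) + (q * x) * s) + c * (starRingEnd ℂ) s).im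
      = - (t⁻¹ * Real.sin (Complex.arg q / 2)) := by
    simp [Complex.add_im, Complex.mul_im, Complex.conj_im, Complex.conj_re, hcdef, hs_im]
    ring
  have hsin_nonneg : 0 ≤ Real.sin (Complex.arg q / 2) := by
    apply Real.sin_nonneg_of_nonneg_of_le_pi <;> nlinarith
  have hkey2 : t⁻¹ * Real.sin (Complex.arg q / 2)
      ≤ ‖1 + q * x + q ^ 3 * x ^ 2‖ * v⁻¹ := by
    have h := Complex.abs_im_le_norm (((starRingEnd ℂ) ((q * x) * s) + (q * x) * s)
      + c * (starRingEnd ℂ) s)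
    rw [him, ← key, norm_mul, Complex.norm_conj, norm_mul, habs_w, habs_s,
      hrv, abs_neg, abs_of_nonneg (by positivity)] at h
    calc t⁻¹ * Real.sin (Complex.arg q / 2) ≤ ‖1 + q * x + q ^ 3 * x ^ 2‖ * (v⁻¹ * 1) := h
    _ = ‖1 + q * x + q ^ 3 * x ^ 2‖ * v⁻¹ := by ring
  -- lower bound on sin(arg q / 2)
  have hsin_lb : (0.37 : ℝ) ≤ Real.sin (Complex.arg q / 2) := by
    have h8 : (0 : ℝ) < Real.pi / 8 := by linarith
    have h81 : Real.pi / 8 ≤ 1 := by linarith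
    have hsin8 : Real.pi / 8 - (Real.pi / 8) ^ 3 / 4 < Real.sin (Real.pi / 8) :=
      by have := Real.sin_gt_sub_cube h8; linarith [pow_pos h8 3]
    have hmono : Real.sin (Real.pi / 8) ≤ Real.sin (Complex.arg q / 2) := by
      apply (Real.strictMonoOn_sin.monotoneOn)
        (Set.mem_Icc.mpr ⟨by linarith, by linarith⟩)
        (Set.mem_Icc.mpr ⟨by linarith, by linarith⟩)
      linarith
    have hx1 : (0.3926 : ℝ) < Real.pi / 8 := by linarith
    have hx2 : Real.pi / 8 < 0.394 := by linarith
    have hcube : (Real.pi / 8) ^ 3 < (0.394 : ℝ) ^ 3 :=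
      pow_lt_pow_left₀ hx2 (by positivity) (by norm_num)
    nlinarith [hsin8, hmono]
  -- head lower bound : abs head ≥ 0.37 / v
  have hhead : (0.37 : ℝ) * v⁻¹ ≤ ‖1 + q * x + q ^ 3 * x ^ 2‖ := by
    have hv1 : v⁻¹ > 0 := by positivity
    have h := hkey2
    have ht_inv : t⁻¹ = v⁻¹ * v⁻¹ := by
      rw [← hvv, mul_inv]
    rw [ht_inv] at h
    have := mul_le_mul_of_nonneg_right h (le_of_lt hv0)
    have hvinv : v⁻¹ * v = 1 := inv_mul_cancel₀ (ne_of_gt hv0)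
    nlinarith [hsin_lb, hv1]
  -- final numeric assembly
  unfold theta
  rw [← hsplit, hhead3]
  have htri : ‖1 + q * x + q ^ 3 * x ^ 2‖
      - ‖∑' j : ℕ, q ^ ((j + 3) * ((j + 3) + 1) / 2) * x ^ (j + 3)‖
      ≤ ‖(1 + q * x + q ^ 3 * x ^ 2)
        + ∑' j : ℕ, q ^ ((j + 3) * ((j + 3) + 1) / 2) * x ^ (j + 3)‖ := by
    have h0 := norm_sub_norm_le (1 + q * x + q ^ 3 * x ^ 2)
      (-(∑' j : ℕ, q ^ ((j + 3) * ((j + 3) + 1) / 2) * x ^ (j + 3)))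
    rw [norm_neg, sub_neg_eq_add] at h0
    simpa using h0
  have hvinv_lb : (0.49 : ℝ)⁻¹ < v⁻¹ := by
    apply inv_strictAnti₀ hv0 hvlt
  have hinv_ub : (1 - t)⁻¹ ≤ (0.76 : ℝ)⁻¹ := by
    apply inv_anti₀ (by norm_num) (by linarith)
  have htv : t * v * (1 - t)⁻¹ ≤ 0.24 * 0.49 * (0.76 : ℝ)⁻¹ := by
    have h1 : (0:ℝ) ≤ t * v := by positivity
    have h2 : t * v ≤ 0.24 * 0.49 := by nlinarith
    nlinarith [inv_pos.mpr (show (0:ℝ) < 1 - t by linarith)]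
  have : 0.224 < (0.37 : ℝ) * v⁻¹ - t ^ ((3 : ℝ) / 2) * (1 - t)⁻¹ := by
    rw [hv32]
    nlinarith [hvinv_lb]
  linarith [htri, htail_le, hhead]
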